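/- Let f: 𝔻 → ℂ be three times continuously differentiable on the unit disk with Re[(Δf)_z · conj(f_z) + (Δf)_{z̄} · conj(f_{z̄})] ≥ 0. Then F = |f_z|² + |f_{z̄}|² is subharmonic on 𝔻; indeed Δ F = 4(|f_{zz}|² + |f_{z̄ z̄}|²) + (1/2)|Δf|² + 2·Re[(Δf)_z·conj(f_z) + (Δf)_{z̄}·conj(f_{z̄})] ≥ 0. -/

import Mathlib

/-! Writing `F = |f_z|² + |f_z̄|²`, apply `Δ|g|² = 2(|g_x|² + |g_y|²) + 2 Re(Δg · conj g)` to
`g = f_z` and `g = f_z̄`. The parallelogram law turns `|g_x|² + |g_y|²` into `2(|g_z|² + |g_z̄|²)`;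
for `f ∈ C³` the Laplacian commutes with `∂_z` and `∂_z̄`, and by symmetry of the second
derivative `f_{z z̄} = f_{z̄ z} = Δf / 4`, which produces the term `(1/2)|Δf|²`. -/

open Complex Metric

/-- The (real) Laplacian Δg = g_xx + g_yy of a function on ℂ. -/
noncomputable def lap {E : Type*} [NormedAddCommGroup E] [NormedSpace ℝ E]
    (g : ℂ → E) (z : ℂ) : E :=
  fderiv ℝ (fun w => fderiv ℝ g w 1) z 1 +
    fderiv ℝ (fun w => fderiv ℝ g w Complex.I) z Complex.I

/-- Wirtinger derivative f_z = (f_x - i f_y)/2. -/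
noncomputable def wd (f : ℂ → ℂ) (z : ℂ) : ℂ :=
  (fderiv ℝ f z 1 - Complex.I * fderiv ℝ f z Complex.I) / 2

/-- Wirtinger derivative f_z̄ = (f_x + i f_y)/2. -/
noncomputable def wdb (f : ℂ → ℂ) (z : ℂ) : ℂ :=
  (fderiv ℝ f z 1 + Complex.I * fderiv ℝ f z Complex.I) / 2

open Filter Topology InnerProductSpace

noncomputable def dirDeriv {E : Type*} [NormedAddCommGroup E] [NormedSpace ℝ E]
    (v : ℂ) (g : ℂ → E) : ℂ → E :=
  fun w => fderiv ℝ g w v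

section DirDeriv

variable {E F : Type*} [NormedAddCommGroup E] [NormedSpace ℝ E]
  [NormedAddCommGroup F] [NormedSpace ℝ F] {g h : ℂ → E} {u v z : ℂ}

theorem lap_eq_dirDeriv (g : ℂ → E) (z : ℂ) :
    lap g z = dirDeriv 1 (dirDeriv 1 g) z + dirDeriv I (dirDeriv I g) z :=
  rfl

theorem ContDiffAt.dirDeriv {m n : WithTop ℕ∞} (hg : ContDiffAt ℝ n g z) (hmn : m + 1 ≤ n) :
    ContDiffAt ℝ m (dirDeriv v g) z :=
  (hg.fderiv_right hmn).clm_apply contDiffAt_const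

theorem dirDeriv_congr (hgh : g =ᶠ[𝓝 z] h) : dirDeriv v g z = dirDeriv v h z := by
  simp only [dirDeriv, hgh.fderiv_eq]

theorem dirDeriv_add (hg : DifferentiableAt ℝ g z) (hh : DifferentiableAt ℝ h z) :
    dirDeriv v (fun w => g w + h w) z = dirDeriv v g z + dirDeriv v h z := by
  simp only [dirDeriv, fderiv_fun_add hg hh, add_apply]

theorem dirDeriv_clm_comp (L : E →L[ℝ] F) (hg : DifferentiableAt ℝ g z) :
    dirDeriv v (fun w => L (g w)) z = L (dirDeriv v g z) :=
  congrArg (· v) (L.hasFDerivAt.comp z hg.hasFDerivAt).fderiv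

theorem dirDeriv_dirDeriv (hg : ContDiffAt ℝ 2 g z) :
    dirDeriv u (dirDeriv v g) z = fderiv ℝ (fderiv ℝ g) z u v :=
  dirDeriv_clm_comp (ContinuousLinearMap.apply ℝ E v)
    ((hg.fderiv_right (m := 1) le_rfl).differentiableAt one_ne_zero)

theorem lap_eq_fderiv_fderiv (hg : ContDiffAt ℝ 2 g z) :
    lap g z = fderiv ℝ (fderiv ℝ g) z 1 1 + fderiv ℝ (fderiv ℝ g) z I I := by
  rw [lap_eq_dirDeriv, dirDeriv_dirDeriv hg, dirDeriv_dirDeriv hg]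

theorem dirDeriv_comm (hg : ContDiffAt ℝ 2 g z) :
    dirDeriv u (dirDeriv v g) z = dirDeriv v (dirDeriv u g) z := by
  rw [dirDeriv_dirDeriv hg, dirDeriv_dirDeriv hg, (hg.isSymmSndFDerivAt (by simp)).eq]

theorem dirDeriv_comm_eventuallyEq (hg : ContDiffAt ℝ 2 g z) :
    dirDeriv u (dirDeriv v g) =ᶠ[𝓝 z] dirDeriv v (dirDeriv u g) := by
  filter_upwards [hg.eventually (by simp)] with w hw
  exact dirDeriv_comm hw

theorem dirDeriv_comm_dirDeriv_dirDeriv (hg : ContDiffAt ℝ 3 g z) :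
    dirDeriv v (dirDeriv u (dirDeriv u g)) z = dirDeriv u (dirDeriv u (dirDeriv v g)) z := by
  rw [dirDeriv_comm (hg.dirDeriv (by norm_num)),
    dirDeriv_congr (dirDeriv_comm_eventuallyEq (hg.of_le (by norm_num)))]

theorem lap_dirDeriv (hg : ContDiffAt ℝ 3 g z) :
    lap (dirDeriv v g) z = dirDeriv v (lap g) z := by
  have hdd : ∀ u : ℂ, DifferentiableAt ℝ (dirDeriv u (dirDeriv u g)) z := fun u =>
    ((hg.dirDeriv (m := 2) (by norm_num)).dirDeriv (m := 1) (by norm_num)).differentiableAt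
      one_ne_zero
  calc lap (dirDeriv v g) z
      = dirDeriv 1 (dirDeriv 1 (dirDeriv v g)) z + dirDeriv I (dirDeriv I (dirDeriv v g)) z := rfl
    _ = dirDeriv v (dirDeriv 1 (dirDeriv 1 g)) z + dirDeriv v (dirDeriv I (dirDeriv I g)) z := by
      rw [dirDeriv_comm_dirDeriv_dirDeriv hg, dirDeriv_comm_dirDeriv_dirDeriv hg]
    _ = dirDeriv v (lap g) z := (dirDeriv_add (hdd 1) (hdd I)).symm

theorem lap_add (hg : ContDiffAt ℝ 2 g z) (hh : ContDiffAt ℝ 2 h z) :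
    lap (fun w => g w + h w) z = lap g z + lap h z := by
  have hnear : ∀ v : ℂ,
      dirDeriv v (fun w => g w + h w) =ᶠ[𝓝 z] fun w => dirDeriv v g w + dirDeriv v h w := by
    intro v
    filter_upwards [hg.eventually (by simp), hh.eventually (by simp)] with w hgw hhw
    exact dirDeriv_add (hgw.differentiableAt two_ne_zero) (hhw.differentiableAt two_ne_zero)
  have hdd : ∀ v : ℂ, DifferentiableAt ℝ (dirDeriv v g) z ∧ DifferentiableAt ℝ (dirDeriv v h) z :=
    fun v => ⟨(hg.dirDeriv (m := 1) le_rfl).differentiableAt one_ne_zero,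
      (hh.dirDeriv (m := 1) le_rfl).differentiableAt one_ne_zero⟩
  simp only [lap_eq_dirDeriv, dirDeriv_congr (hnear _), dirDeriv_add (hdd _).1 (hdd _).2]
  abel

theorem lap_clm_comp (L : E →L[ℝ] F) (hg : ContDiffAt ℝ 2 g z) :
    lap (fun w => L (g w)) z = L (lap g z) := by
  have hnear : ∀ v : ℂ, dirDeriv v (fun w => L (g w)) =ᶠ[𝓝 z] fun w => L (dirDeriv v g w) := by
    intro v
    filter_upwards [hg.eventually (by simp)] with w hw
    exact dirDeriv_clm_comp L (hw.differentiableAt two_ne_zero)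
  simp only [lap_eq_dirDeriv, dirDeriv_congr (hnear _), map_add,
    dirDeriv_clm_comp L ((hg.dirDeriv (m := 1) le_rfl).differentiableAt one_ne_zero)]

theorem lap_fderiv (hg : ContDiffAt ℝ 3 g z) : lap (fderiv ℝ g) z = fderiv ℝ (lap g) z := by
  ext v
  rw [← ContinuousLinearMap.apply_apply v (lap _ z),
    ← lap_clm_comp _ (hg.fderiv_right (by norm_num))]
  exact lap_dirDeriv hg

end DirDeriv

section InnerProduct

variable {E : Type*} [NormedAddCommGroup E] [InnerProductSpace ℝ E] {g h : ℂ → E} {v z : ℂ}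

theorem dirDeriv_norm_sq (hg : DifferentiableAt ℝ g z) :
    dirDeriv v (fun w => ‖g w‖ ^ 2) z = 2 * ⟪g z, dirDeriv v g z⟫_ℝ := by
  simp only [← real_inner_self_eq_norm_sq]
  rw [dirDeriv, fderiv_inner_apply ℝ hg hg, real_inner_comm (g z), ← two_mul]
  rfl

theorem dirDeriv_inner (hg : DifferentiableAt ℝ g z) (hh : DifferentiableAt ℝ h z) :
    dirDeriv v (fun w => ⟪g w, h w⟫_ℝ) z = ⟪dirDeriv v g z, h z⟫_ℝ + ⟪g z, dirDeriv v h z⟫_ℝ := by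
  rw [dirDeriv, fderiv_inner_apply ℝ hg hh, add_comm]
  rfl

theorem lap_norm_sq (hg : ContDiffAt ℝ 2 g z) :
    lap (fun w => ‖g w‖ ^ 2) z =
      2 * (‖dirDeriv 1 g z‖ ^ 2 + ‖dirDeriv I g z‖ ^ 2) + 2 * ⟪g z, lap g z⟫_ℝ := by
  have hnear : ∀ v : ℂ,
      dirDeriv v (fun w => ‖g w‖ ^ 2) =ᶠ[𝓝 z] fun w => 2 * ⟪g w, dirDeriv v g w⟫_ℝ := by
    intro v
    filter_upwards [hg.eventually (by simp)] with w hw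
    exact dirDeriv_norm_sq (hw.differentiableAt two_ne_zero)
  have hsecond : ∀ v : ℂ, dirDeriv v (dirDeriv v fun w => ‖g w‖ ^ 2) z =
      2 * (‖dirDeriv v g z‖ ^ 2 + ⟪g z, dirDeriv v (dirDeriv v g) z⟫_ℝ) := by
    intro v
    have hd : DifferentiableAt ℝ g z := hg.differentiableAt two_ne_zero
    have hdd : DifferentiableAt ℝ (dirDeriv v g) z :=
      (hg.dirDeriv (m := 1) le_rfl).differentiableAt one_ne_zero
    rw [dirDeriv_congr (hnear v), dirDeriv, fderiv_const_mul (hd.inner ℝ hdd),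
      smul_apply, ← dirDeriv, dirDeriv_inner hd hdd,
      real_inner_self_eq_norm_sq, smul_eq_mul]
  rw [lap_eq_dirDeriv, hsecond, hsecond, lap_eq_dirDeriv g, inner_add_right]
  ring

end InnerProduct

noncomputable def wirtingerCLM (c : ℂ) : (ℂ →L[ℝ] ℂ) →L[ℝ] ℂ :=
  (2⁻¹ : ℂ) • (ContinuousLinearMap.apply ℝ ℂ 1 + c • ContinuousLinearMap.apply ℝ ℂ I)

section Wirtinger

variable {f : ℂ → ℂ} {z : ℂ}

theorem wirtingerCLM_apply (c : ℂ) (A : ℂ →L[ℝ] ℂ) : wirtingerCLM c A = (A 1 + c * A I) / 2 := by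
  simp only [wirtingerCLM, smul_apply, add_apply,
    ContinuousLinearMap.apply_apply, smul_eq_mul]
  ring

theorem wd_eq_wirtingerCLM (f : ℂ → ℂ) : wd f = fun w => wirtingerCLM (-I) (fderiv ℝ f w) := by
  ext w
  rw [wirtingerCLM_apply, wd]
  ring

theorem wdb_eq_wirtingerCLM (f : ℂ → ℂ) : wdb f = fun w => wirtingerCLM I (fderiv ℝ f w) := by
  ext w
  rw [wirtingerCLM_apply, wdb]

theorem ContDiffAt.wd {m n : WithTop ℕ∞} (hf : ContDiffAt ℝ n f z) (hmn : m + 1 ≤ n) :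
    ContDiffAt ℝ m (wd f) z := by
  rw [wd_eq_wirtingerCLM]
  exact (wirtingerCLM (-I)).contDiff.comp_contDiffAt z (hf.fderiv_right hmn)

theorem ContDiffAt.wdb {m n : WithTop ℕ∞} (hf : ContDiffAt ℝ n f z) (hmn : m + 1 ≤ n) :
    ContDiffAt ℝ m (wdb f) z := by
  rw [wdb_eq_wirtingerCLM]
  exact (wirtingerCLM I).contDiff.comp_contDiffAt z (hf.fderiv_right hmn)

theorem lap_wd (hf : ContDiffAt ℝ 3 f z) : lap (wd f) z = wd (lap f) z := by
  simp only [wd_eq_wirtingerCLM]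
  rw [lap_clm_comp _ (hf.fderiv_right (by norm_num)), lap_fderiv hf]

theorem lap_wdb (hf : ContDiffAt ℝ 3 f z) : lap (wdb f) z = wdb (lap f) z := by
  simp only [wdb_eq_wirtingerCLM]
  rw [lap_clm_comp _ (hf.fderiv_right (by norm_num)), lap_fderiv hf]

theorem wirtingerCLM_fderiv_wirtingerCLM (c c' : ℂ) (hf : ContDiffAt ℝ 2 f z) :
    wirtingerCLM c (fderiv ℝ (fun w => wirtingerCLM c' (fderiv ℝ f w)) z) =
      (fderiv ℝ (fderiv ℝ f) z 1 1 + c * c' * fderiv ℝ (fderiv ℝ f) z I I +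
        (c + c') * fderiv ℝ (fderiv ℝ f) z 1 I) / 4 := by
  have hD : ∀ v : ℂ, fderiv ℝ (fun w => wirtingerCLM c' (fderiv ℝ f w)) z v =
      wirtingerCLM c' (fderiv ℝ (fderiv ℝ f) z v) := fun v =>
    dirDeriv_clm_comp _ ((hf.fderiv_right (m := 1) le_rfl).differentiableAt one_ne_zero)
  have hsymm : fderiv ℝ (fderiv ℝ f) z I 1 = fderiv ℝ (fderiv ℝ f) z 1 I :=
    (hf.isSymmSndFDerivAt (by simp)).eq I 1
  rw [wirtingerCLM_apply, hD, hD, wirtingerCLM_apply, wirtingerCLM_apply, hsymm]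
  ring

theorem wd_wdb (hf : ContDiffAt ℝ 2 f z) : wd (wdb f) z = lap f z / 4 := by
  simp only [wd_eq_wirtingerCLM, wdb_eq_wirtingerCLM]
  rw [lap_eq_fderiv_fderiv hf, wirtingerCLM_fderiv_wirtingerCLM _ _ hf]
  linear_combination (-fderiv ℝ (fderiv ℝ f) z I I / 4) * I_mul_I

theorem wdb_wd (hf : ContDiffAt ℝ 2 f z) : wdb (wd f) z = lap f z / 4 := by
  simp only [wd_eq_wirtingerCLM, wdb_eq_wirtingerCLM]
  rw [lap_eq_fderiv_fderiv hf, wirtingerCLM_fderiv_wirtingerCLM _ _ hf]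
  linear_combination (-fderiv ℝ (fderiv ℝ f) z I I / 4) * I_mul_I

theorem norm_sq_dirDeriv_one_add_norm_sq_dirDeriv_I (f : ℂ → ℂ) (z : ℂ) :
    ‖dirDeriv 1 f z‖ ^ 2 + ‖dirDeriv I f z‖ ^ 2 = 2 * (‖wd f z‖ ^ 2 + ‖wdb f z‖ ^ 2) := by
  have hpar := parallelogram_law_with_norm ℝ (dirDeriv 1 f z) (I * dirDeriv I f z)
  simp only [norm_mul, norm_I, one_mul] at hpar
  simp only [wd, wdb, norm_div, Complex.norm_ofNat]
  change _ = 2 * ((‖dirDeriv 1 f z - I * dirDeriv I f z‖ / 2) ^ 2 +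
    (‖dirDeriv 1 f z + I * dirDeriv I f z‖ / 2) ^ 2)
  linarith

end Wirtinger

/-- If f ∈ C³(𝔻) and Re[(Δf)_z conj(f_z) + (Δf)_z̄ conj(f_z̄)] ≥ 0,
then F = |f_z|² + |f_z̄|² is subharmonic: indeed
ΔF = 4(|f_zz|² + |f_z̄z̄|²) + (1/2)|Δf|² + 2 Re[(Δf)_z conj(f_z) + (Δf)_z̄ conj(f_z̄)] ≥ 0. -/
theorem grad_sq_subharmonic (f : ℂ → ℂ)
    (hf : ContDiffOn ℝ 3 f (ball (0:ℂ) 1))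
    (hRe : ∀ z ∈ ball (0:ℂ) 1,
      0 ≤ (wd (lap f) z * (starRingEnd ℂ) (wd f z) +
            wdb (lap f) z * (starRingEnd ℂ) (wdb f z)).re) :
    ∀ z ∈ ball (0:ℂ) 1,
      lap (fun w => ‖wd f w‖ ^ 2 + ‖wdb f w‖ ^ 2) z =
        4 * (‖wd (wd f) z‖ ^ 2 + ‖wdb (wdb f) z‖ ^ 2) + (1 / 2) * ‖lap f z‖ ^ 2 +
          2 * (wd (lap f) z * (starRingEnd ℂ) (wd f z) +
                wdb (lap f) z * (starRingEnd ℂ) (wdb f z)).re ∧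
      0 ≤ lap (fun w => ‖wd f w‖ ^ 2 + ‖wdb f w‖ ^ 2) z := by
  intro z hz
  have hf3 : ContDiffAt ℝ 3 f z := hf.contDiffAt (isOpen_ball.mem_nhds hz)
  have hf2 : ContDiffAt ℝ 2 f z := hf3.of_le (by norm_num)
  have hwd : ContDiffAt ℝ 2 (wd f) z := hf3.wd (by norm_num)
  have hwdb : ContDiffAt ℝ 2 (wdb f) z := hf3.wdb (by norm_num)
  have hlap : lap (fun w => ‖wd f w‖ ^ 2 + ‖wdb f w‖ ^ 2) z =
      4 * (‖wd (wd f) z‖ ^ 2 + ‖wdb (wdb f) z‖ ^ 2) + (1 / 2) * ‖lap f z‖ ^ 2 +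
        2 * (wd (lap f) z * (starRingEnd ℂ) (wd f z) +
          wdb (lap f) z * (starRingEnd ℂ) (wdb f z)).re := by
    rw [lap_add (hwd.norm_sq ℝ) (hwdb.norm_sq ℝ), lap_norm_sq hwd, lap_norm_sq hwdb,
      norm_sq_dirDeriv_one_add_norm_sq_dirDeriv_I, norm_sq_dirDeriv_one_add_norm_sq_dirDeriv_I,
      lap_wd hf3, lap_wdb hf3, wdb_wd hf2, wd_wdb hf2, Complex.inner, Complex.inner,
      Complex.add_re, norm_div, Complex.norm_ofNat]
    ring
  exact ⟨hlap, hlap ▸ add_nonneg (by positivity) (mul_nonneg zero_le_two (hRe z hz))⟩
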